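/- For every real α, all 0 < u < s, every z > 0 and every x > 0, one has ∫₀^∞ f₊(z, ζ; s−u; α) · ζ μ(u;α) e^{−ζ μ(u;α)} · (1/β(u;α)) e^{−x/β(u;α)} dζ = (μ(s;α)/β(s;α)) · z e^{−z μ(s;α)} · e^{−x/β(u;α)}. (This semigroup-type integral identity is the core computation in the proof of Lemma 6, which derives the joint density of the time back to the MRCA and the contemporaneous population size.) -/

import Mathlib

open MeasureTheory Real Filter Set

/-- `muF t α` is the function μ(t;α) = 2α e^{αt}/(e^{αt} − 1) for α ≠ 0, and 2/t for α = 0. -/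
noncomputable def muF (t α : ℝ) : ℝ :=
  if α = 0 then 2 / t else 2 * α * Real.exp (α * t) / (Real.exp (α * t) - 1)

/-- `betaF t α` is the function β(t;α) = (e^{αt} − 1)/(2α) for α ≠ 0, and t/2 for α = 0. -/
noncomputable def betaF (t α : ℝ) : ℝ :=
  if α = 0 then t / 2 else (Real.exp (α * t) - 1) / (2 * α)

/-- `fl l x₀ x t α` is the term f_l(x₀, x; t; α), the joint density contribution from `l`
founding families. -/
noncomputable def fl (l : ℕ) (x₀ x t α : ℝ) : ℝ :=
  Real.exp (-(x₀ * muF t α)) * (x₀ * muF t α) ^ l / (Nat.factorial l : ℝ) *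
    (x ^ (l - 1) * Real.exp (-(x / betaF t α)) / (betaF t α ^ l * (Nat.factorial (l - 1) : ℝ)))

/-- `fplus x₀ x t α` = ∑_{l=1}^∞ f_l(x₀, x; t; α), the absolutely continuous part of the
Feller-diffusion transition density. -/
noncomputable def fplus (x₀ x t α : ℝ) : ℝ := ∑' l : ℕ, fl (l + 1) x₀ x t α


lemma muF_pos {t : ℝ} (ht : 0 < t) (α : ℝ) : 0 < muF t α := by
  unfold muF
  split_ifs with h
  · positivity
  · rcases lt_or_gt_of_ne h with hneg | hpos
    · have h1 : Real.exp (α * t) < 1 := by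
        rw [Real.exp_lt_one_iff]; exact mul_neg_of_neg_of_pos hneg ht
      have h2 : 0 < Real.exp (α * t) := Real.exp_pos _
      apply div_pos_of_neg_of_neg <;> nlinarith
    · have h1 : 1 < Real.exp (α * t) := by
        rw [Real.one_lt_exp_iff]; positivity
      have h2 : 0 < Real.exp (α * t) := Real.exp_pos _
      apply div_pos <;> nlinarith

lemma betaF_pos {t : ℝ} (ht : 0 < t) (α : ℝ) : 0 < betaF t α := by
  unfold betaF
  split_ifs with h
  · positivity
  · rcases lt_or_gt_of_ne h with hneg | hpos
    · have h1 : Real.exp (α * t) < 1 := by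
        rw [Real.exp_lt_one_iff]; exact mul_neg_of_neg_of_pos hneg ht
      apply div_pos_of_neg_of_neg <;> nlinarith
    · have h1 : 1 < Real.exp (α * t) := by
        rw [Real.one_lt_exp_iff]; positivity
      apply div_pos <;> nlinarith

lemma exp_sub_one_ne {α t : ℝ} (hα : α ≠ 0) (ht : 0 < t) : Real.exp (α * t) - 1 ≠ 0 := by
  intro h
  have h1 : Real.exp (α * t) = 1 := by linarith
  rw [Real.exp_eq_one_iff] at h1
  rcases mul_eq_zero.mp h1 with h2 | h2
  · exact hα h2
  · exact ht.ne' h2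

lemma integrableOn_pow_exp (l : ℕ) {c : ℝ} (hc : 0 < c) :
    IntegrableOn (fun ζ : ℝ => ζ ^ l * Real.exp (-(c * ζ))) (Ioi 0) := by
  have h := integrableOn_rpow_mul_exp_neg_mul_rpow (s := (l : ℝ)) (p := 1)
    (lt_of_lt_of_le neg_one_lt_zero (Nat.cast_nonneg l)) one_pos hc
  refine h.congr_fun (fun x hx => ?_) measurableSet_Ioi
  beta_reduce
  rw [Real.rpow_one, Real.rpow_natCast, neg_mul]

lemma integral_pow_exp (l : ℕ) {c : ℝ} (hc : 0 < c) :
    ∫ ζ in Ioi (0 : ℝ), ζ ^ l * Real.exp (-(c * ζ)) = (Nat.factorial l : ℝ) / c ^ (l + 1) := by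
  have h := Real.integral_rpow_mul_exp_neg_mul_Ioi (a := (l : ℝ) + 1) (by positivity) hc
  have h2 : ∀ t ∈ Ioi (0 : ℝ), t ^ ((l : ℝ) + 1 - 1) * Real.exp (-(c * t))
      = t ^ l * Real.exp (-(c * t)) := by
    intro t _
    rw [add_sub_cancel_right, Real.rpow_natCast]
  rw [setIntegral_congr_fun measurableSet_Ioi h2] at h
  rw [h, Real.Gamma_nat_eq_factorial,
    show ((l : ℝ) + 1) = ((l + 1 : ℕ) : ℝ) by push_cast; ring,
    Real.rpow_natCast, one_div, inv_pow]
  ring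

lemma exp_tsum (r : ℝ) : ∑' l : ℕ, r ^ l / (Nat.factorial l : ℝ) = Real.exp r := by
  rw [Real.exp_eq_exp_ℝ, NormedSpace.exp_eq_tsum_div]

lemma core (z m b μu c : ℝ) (hz : 0 < z) (hm : 0 < m) (hb : 0 < b) (hμu : 0 < μu)
    (hc : 1 / b + μu = c) :
    ∫ ζ in Ioi (0 : ℝ),
        (∑' l : ℕ, Real.exp (-(z * m)) * (z * m) ^ (l + 1) / (Nat.factorial (l + 1) : ℝ) *
          (ζ ^ l * Real.exp (-(ζ / b)) / (b ^ (l + 1) * (Nat.factorial l : ℝ)))) *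
        (ζ * μu * Real.exp (-(ζ * μu)))
      = z * m * μu / (b * c ^ 2) * Real.exp (-(z * m) + z * m / (b * c)) := by
  have hb' : b ≠ 0 := ne_of_gt hb
  have hcpos : 0 < c := by
    rw [← hc]; exact add_pos (div_pos one_pos hb) hμu
  have hc' : c ≠ 0 := ne_of_gt hcpos
  obtain ⟨r, hr⟩ : ∃ r : ℝ, z * m / (b * c) = r := ⟨_, rfl⟩
  have hrpos : 0 < r := by
    rw [← hr]; exact div_pos (mul_pos hz hm) (mul_pos hb hcpos)
  set g : ℕ → ℝ → ℝ := fun l ζ =>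
    (Real.exp (-(z * m)) * (z * m) ^ (l + 1) / (Nat.factorial (l + 1) : ℝ) *
      (ζ ^ l * Real.exp (-(ζ / b)) / (b ^ (l + 1) * (Nat.factorial l : ℝ)))) *
    (ζ * μu * Real.exp (-(ζ * μu))) with hg
  set D : ℕ → ℝ := fun l =>
    Real.exp (-(z * m)) * (z * m) ^ (l + 1) * μu /
      ((Nat.factorial (l + 1) : ℝ) * b ^ (l + 1) * (Nat.factorial l : ℝ)) with hD
  have hfby : ∀ l : ℕ, (0 : ℝ) < (Nat.factorial l : ℝ) := by
    intro l; exact_mod_cast Nat.factorial_pos l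
  have hDpos : ∀ l, 0 < D l := by
    intro l
    rw [hD]
    exact div_pos (mul_pos (mul_pos (Real.exp_pos _) (pow_pos (mul_pos hz hm) _)) hμu)
      (mul_pos (mul_pos (hfby (l + 1)) (pow_pos hb _)) (hfby l))
  have hFeq : ∀ l : ℕ, ∀ ζ : ℝ, g l ζ = D l * (ζ ^ (l + 1) * Real.exp (-(c * ζ))) := by
    intro l ζ
    have h1 : -(c * ζ) = -(ζ / b) + -(ζ * μu) := by
      rw [← hc]; field_simp; ring
    rw [hg, hD, h1, Real.exp_add]
    ring
  have hInt : ∀ l : ℕ, Integrable (g l) (volume.restrict (Ioi (0 : ℝ))) := by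
    intro l
    have : g l = fun ζ => D l * (ζ ^ (l + 1) * Real.exp (-(c * ζ))) := funext (hFeq l)
    rw [this]
    exact ((integrableOn_pow_exp (l + 1) hcpos).const_mul _)
  have hVal : ∀ l : ℕ, ∫ ζ in Ioi (0 : ℝ), g l ζ
      = D l * ((Nat.factorial (l + 1) : ℝ) / c ^ (l + 2)) := by
    intro l
    simp_rw [hFeq l]
    rw [MeasureTheory.integral_const_mul, integral_pow_exp (l + 1) hcpos]
  have hSimp : ∀ l : ℕ, D l * ((Nat.factorial (l + 1) : ℝ) / c ^ (l + 2))
      = Real.exp (-(z * m)) * μu / c * (r * (r ^ l / (Nat.factorial l : ℝ))) := by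
    intro l
    have hf1 : ((Nat.factorial (l + 1) : ℕ) : ℝ) ≠ 0 := (hfby (l + 1)).ne'
    have hf2 : ((Nat.factorial l : ℕ) : ℝ) ≠ 0 := (hfby l).ne'
    rw [hD, ← hr]
    simp only [div_pow, mul_pow]
    field_simp
    ring
  have hNorm : ∀ l : ℕ, ∫ ζ in Ioi (0 : ℝ), ‖g l ζ‖
      = Real.exp (-(z * m)) * μu / c * (r * (r ^ l / (Nat.factorial l : ℝ))) := by
    intro l
    have h1 : ∀ ζ ∈ Ioi (0 : ℝ), ‖g l ζ‖ = g l ζ := by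
      intro ζ hζ
      have hnn : (0 : ℝ) ≤ g l ζ := by
        rw [hFeq l ζ]
        exact mul_nonneg (hDpos l).le
          (mul_nonneg (pow_nonneg (le_of_lt hζ) _) (Real.exp_pos _).le)
      exact Real.norm_of_nonneg hnn
    rw [setIntegral_congr_fun measurableSet_Ioi h1, hVal l, hSimp l]
  have hSum : Summable fun l : ℕ =>
      Real.exp (-(z * m)) * μu / c * (r * (r ^ l / (Nat.factorial l : ℝ))) :=
    ((Real.summable_pow_div_factorial r).mul_left r).mul_left _
  have hswap : ∑' l : ℕ, ∫ ζ in Ioi (0 : ℝ), g l ζ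
      = ∫ ζ in Ioi (0 : ℝ), ∑' l : ℕ, g l ζ := by
    refine integral_tsum_of_summable_integral_norm hInt ?_
    simp_rw [hNorm]
    exact hSum
  have hLHS : ∫ ζ in Ioi (0 : ℝ),
      (∑' l : ℕ, Real.exp (-(z * m)) * (z * m) ^ (l + 1) / (Nat.factorial (l + 1) : ℝ) *
        (ζ ^ l * Real.exp (-(ζ / b)) / (b ^ (l + 1) * (Nat.factorial l : ℝ)))) *
      (ζ * μu * Real.exp (-(ζ * μu)))
      = ∫ ζ in Ioi (0 : ℝ), ∑' l : ℕ, g l ζ := by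
    refine integral_congr_ae (Eventually.of_forall fun ζ => ?_)
    rw [hg]
    exact (tsum_mul_right).symm
  have hvals : ∀ l : ℕ, ∫ ζ in Ioi (0 : ℝ), g l ζ
      = Real.exp (-(z * m)) * μu / c * (r * (r ^ l / (Nat.factorial l : ℝ))) := by
    intro l; rw [hVal l, hSimp l]
  rw [hLHS, ← hswap, tsum_congr hvals, tsum_mul_left, tsum_mul_left, exp_tsum r,
    Real.exp_add, ← hr]
  field_simp

lemma key1 (α u s : ℝ) (hu : 0 < u) (hus : u < s) :
    muF (s - u) α - muF (s - u) α /
        (betaF (s - u) α * (1 / betaF (s - u) α + muF u α)) = muF s α := by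
  have ht : 0 < s - u := sub_pos.mpr hus
  have hs : 0 < s := hu.trans hus
  have hu' : u ≠ 0 := hu.ne'
  have ht' : s - u ≠ 0 := ht.ne'
  have hs' : s ≠ 0 := hs.ne'
  by_cases hα : α = 0
  · subst hα
    simp only [muF, betaF, if_pos rfl, ↓reduceIte]
    field_simp
    ring
  · have hA : Real.exp (α * u) - 1 ≠ 0 := exp_sub_one_ne hα hu
    have hB : Real.exp (α * (s - u)) - 1 ≠ 0 := exp_sub_one_ne hα ht
    have hab : Real.exp (α * s) = Real.exp (α * u) * Real.exp (α * (s - u)) := by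
      rw [← Real.exp_add]; congr 1; ring
    have hS : Real.exp (α * u) * Real.exp (α * (s - u)) - 1 ≠ 0 := by
      rw [← hab]; exact exp_sub_one_ne hα hs
    have hα2 : (2 : ℝ) * α ≠ 0 := mul_ne_zero two_ne_zero hα
    have hcv : 1 / betaF (s - u) α + muF u α =
        2 * α * (Real.exp (α * u) * Real.exp (α * (s - u)) - 1) /
          ((Real.exp (α * u) - 1) * (Real.exp (α * (s - u)) - 1)) := by
      simp only [muF, betaF, if_neg hα]
      rw [one_div_div]
      field_simp
      ring
    rw [hcv]
    simp only [muF, betaF, if_neg hα]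
    rw [hab]
    have hprod : (2 : ℝ) * α * (Real.exp (α * u) * Real.exp (α * (s - u)) - 1) ≠ 0 :=
      mul_ne_zero hα2 hS
    generalize Real.exp (α * u) = a at *
    generalize Real.exp (α * (s - u)) = b at *
    field_simp
    have h3 : -1 + b * a ≠ 0 := by intro h; apply hS; linarith
    ring_nf
    field_simp
    ring

lemma key2 (α u s : ℝ) (hu : 0 < u) (hus : u < s) :
    muF (s - u) α * muF u α /
        (betaF (s - u) α * (1 / betaF (s - u) α + muF u α) ^ 2 * betaF u α)
      = muF s α / betaF s α := by
  have ht : 0 < s - u := sub_pos.mpr hus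
  have hs : 0 < s := hu.trans hus
  have hu' : u ≠ 0 := hu.ne'
  have ht' : s - u ≠ 0 := ht.ne'
  have hs' : s ≠ 0 := hs.ne'
  by_cases hα : α = 0
  · subst hα
    simp only [muF, betaF, if_pos rfl, ↓reduceIte]
    field_simp
    ring
  · have hA : Real.exp (α * u) - 1 ≠ 0 := exp_sub_one_ne hα hu
    have hB : Real.exp (α * (s - u)) - 1 ≠ 0 := exp_sub_one_ne hα ht
    have hab : Real.exp (α * s) = Real.exp (α * u) * Real.exp (α * (s - u)) := by
      rw [← Real.exp_add]; congr 1; ring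
    have hS : Real.exp (α * u) * Real.exp (α * (s - u)) - 1 ≠ 0 := by
      rw [← hab]; exact exp_sub_one_ne hα hs
    have hα2 : (2 : ℝ) * α ≠ 0 := mul_ne_zero two_ne_zero hα
    have hcv : 1 / betaF (s - u) α + muF u α =
        2 * α * (Real.exp (α * u) * Real.exp (α * (s - u)) - 1) /
          ((Real.exp (α * u) - 1) * (Real.exp (α * (s - u)) - 1)) := by
      simp only [muF, betaF, if_neg hα]
      rw [one_div_div]
      field_simp
      ring
    rw [hcv]
    simp only [muF, betaF, if_neg hα]
    rw [hab]
    have hprod : (2 : ℝ) * α * (Real.exp (α * u) * Real.exp (α * (s - u)) - 1) ≠ 0 :=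
      mul_ne_zero hα2 hS
    field_simp

theorem stmt17 (α u s z x : ℝ) (hu : 0 < u) (hus : u < s) (hz : 0 < z) (hx : 0 < x) :
    ∫ ζ in Set.Ioi (0 : ℝ),
        fplus z ζ (s - u) α * (ζ * muF u α * Real.exp (-(ζ * muF u α))) *
          ((1 / betaF u α) * Real.exp (-(x / betaF u α)))
      = (muF s α / betaF s α) * z * Real.exp (-(z * muF s α)) *
          Real.exp (-(x / betaF u α)) := by
  have ht : 0 < s - u := sub_pos.mpr hus
  have hm : 0 < muF (s - u) α := muF_pos ht α
  have hb : 0 < betaF (s - u) α := betaF_pos ht α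
  have hμu : 0 < muF u α := muF_pos hu α
  have hβu : 0 < betaF u α := betaF_pos hu α
  rw [MeasureTheory.integral_mul_const]
  have hcore : ∫ ζ in Ioi (0 : ℝ),
      fplus z ζ (s - u) α * (ζ * muF u α * Real.exp (-(ζ * muF u α)))
      = z * muF (s - u) α * muF u α /
          (betaF (s - u) α * (1 / betaF (s - u) α + muF u α) ^ 2) *
        Real.exp (-(z * muF (s - u) α) + z * muF (s - u) α /
          (betaF (s - u) α * (1 / betaF (s - u) α + muF u α))) := by
    rw [← core z (muF (s - u) α) (betaF (s - u) α) (muF u α)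
      (1 / betaF (s - u) α + muF u α) hz hm hb hμu rfl]
    refine integral_congr_ae (Eventually.of_forall fun ζ => ?_)
    simp only [fplus, fl, Nat.add_sub_cancel]
  rw [hcore]
  have k1 : -(z * muF (s - u) α) + z * muF (s - u) α /
      (betaF (s - u) α * (1 / betaF (s - u) α + muF u α)) = -(z * muF s α) := by
    rw [← key1 α u s hu hus]
    ring
  rw [k1]
  have k2 := key2 α u s hu hus
  rw [← k2]
  have hc0 : 0 < 1 / betaF (s - u) α + muF u α := add_pos (div_pos one_pos hb) hμu
  have hB1 : betaF (s - u) α * (1 / betaF (s - u) α + muF u α) ^ 2 ≠ 0 :=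
    (mul_pos hb (pow_pos hc0 2)).ne'
  have hb' : betaF (s - u) α ≠ 0 := hb.ne'
  have hβu' : betaF u α ≠ 0 := hβu.ne'
  have hc0' : 1 / betaF (s - u) α + muF u α ≠ 0 := hc0.ne'
  field_simp
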